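/- For x ∈ C¹([a,b],ℝ) and differentiable α : (a,b) → (0,1), the type I left Riemann–Liouville and Caputo variable-order derivatives are related by ₐD_t^{α(t)} x(t) = ᶜₐD_t^{α(t)} x(t) + (x(a)/Γ(1-α(t))) (t-a)^{-α(t)} + (x(a) α'(t)/Γ(2-α(t))) (t-a)^{1-α(t)} [1/(1-α(t)) − ln(t-a)]. -/

import Mathlib

open Real intervalIntegral Set MeasureTheory
open scoped Topology Interval

/-! Writing `x τ = (x τ - x a) + x a` splits the Riemann–Liouville integral into the Caputo
integral plus `x a * (s - a) ^ (1 - α s) / (1 - α s)`; differentiating the latter at `t` and using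
`Γ(2 - α) = (1 - α) Γ(1 - α)` gives the two correction terms.

The analytic point is that the Caputo integral is differentiable at `t` (otherwise `deriv` is junk
and the derivative of the sum does not split). The substitution `τ = a + (s - a) u` writes it as
`(s - a) ^ (1 - α s) * J (α s, s)` with `J (β, s) = ∫₀¹ (1 - u) ^ (-β) (x (a + (s - a) u) - x a) du`,
and `J` is jointly differentiable by dominated differentiation under the integral: for `β < c < 1`
its partial derivatives are dominated by `(1 - u) ^ (-c) (X + Y |log (1 - u)|)`, which is
integrable on `(0, 1)`. -/

theorem intervalIntegrable_sub_rpow {r : ℝ} (hr : -1 < r) (a s : ℝ) :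
    IntervalIntegrable (fun τ : ℝ => (s - τ) ^ r) volume a s := by
  simpa using (intervalIntegrable_rpow' (a := s - a) (b := 0) hr).comp_sub_left s

theorem intervalIntegrable_abs_log_mul_rpow {r : ℝ} (hr : -1 < r) :
    IntervalIntegrable (fun v : ℝ => |log v| * v ^ r) volume 0 1 := by
  set e := (r + 1) / 2
  have he : 0 < e := by simp only [e]; linarith
  refine ((intervalIntegrable_rpow' (r := r - e) (by simp only [e]; linarith)).const_mul
    (1 / e)).mono_fun (by fun_prop) ?_
  rw [uIoc_of_le zero_le_one]
  filter_upwards [ae_restrict_mem measurableSet_Ioc] with v ⟨hv0, hv1⟩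
  have hsplit : |log v| * v ^ r = |log v * v ^ e| * v ^ (r - e) := by
    rw [abs_mul, abs_of_pos (rpow_pos_of_pos hv0 e), mul_assoc, ← rpow_add hv0, add_sub_cancel]
  rw [norm_of_nonneg (by positivity), norm_of_nonneg (by positivity), hsplit]
  exact mul_le_mul_of_nonneg_right (abs_log_mul_self_rpow_lt v e hv0 hv1 he).le (by positivity)

open ContinuousLinearMap in
theorem hasFDerivAt_one_sub_rpow_mul_comp {y : ℝ → ℝ} {y' a u : ℝ} {p : ℝ × ℝ} (hu : u < 1)
    (hy : HasDerivAt y y' (a + (p.2 - a) * u)) :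
    HasFDerivAt (fun q : ℝ × ℝ => (1 - u) ^ (-q.1) * y (a + (q.2 - a) * u))
      ((1 - u) ^ (-p.1) •
        ((u * y') • snd ℝ ℝ ℝ - (log (1 - u) * y (a + (p.2 - a) * u)) • fst ℝ ℝ ℝ)) p := by
  have hpow := (hasFDerivAt_fst (p := p) (𝕜 := ℝ)).neg.const_rpow (sub_pos.2 hu)
  have hcomp := hy.comp_hasFDerivAt p
    ((((hasFDerivAt_snd (p := p) (𝕜 := ℝ)).sub_const a).mul_const u).const_add a)
  refine (hpow.mul hcomp).congr_fderiv ?_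
  ext <;> simp [mul_comm, mul_left_comm]

open ContinuousLinearMap in
theorem norm_smul_snd_sub_smul_fst_le (c d : ℝ) :
    ‖c • snd ℝ ℝ ℝ - d • fst ℝ ℝ ℝ‖ ≤ |c| + |d| := by
  refine opNorm_le_bound _ (by positivity) fun q => ?_
  simp only [sub_apply, smul_apply, coe_snd', coe_fst', smul_eq_mul, Real.norm_eq_abs]
  calc |c * q.2 - d * q.1| ≤ |c| * |q.2| + |d| * |q.1| := by
        rw [← abs_mul, ← abs_mul]; exact abs_sub _ _
    _ ≤ |c| * ‖q‖ + |d| * ‖q‖ := by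
        gcongr
        · exact norm_snd_le q
        · exact norm_fst_le q
    _ = (|c| + |d|) * ‖q‖ := by ring

open ContinuousLinearMap in
theorem norm_one_sub_rpow_smul_le {u β c A B X Y : ℝ} (hu : u ∈ Ioo (0:ℝ) 1) (hβc : β ≤ c)
    (hA : |A| ≤ X) (hB : |B| ≤ Y) :
    ‖(1 - u) ^ (-β) • ((u * A) • snd ℝ ℝ ℝ - (log (1 - u) * B) • fst ℝ ℝ ℝ)‖ ≤
      (1 - u) ^ (-c) * (X + |log (1 - u)| * Y) := by
  have h1u : 0 < 1 - u := sub_pos.2 hu.2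
  rw [norm_smul, norm_of_nonneg (rpow_nonneg h1u.le _)]
  refine mul_le_mul (rpow_le_rpow_of_exponent_ge h1u (by linarith [hu.1]) (neg_le_neg hβc))
    ((norm_smul_snd_sub_smul_fst_le _ _).trans ?_) (norm_nonneg _) (rpow_nonneg h1u.le _)
  rw [abs_mul, abs_mul, abs_of_pos hu.1]
  gcongr
  exact (mul_le_of_le_one_left (abs_nonneg _) hu.2.le).trans hA

theorem intervalIntegrable_one_sub_rpow_mul_add_abs_log {c : ℝ} (hc : c < 1) (X Y : ℝ) :
    IntervalIntegrable (fun u : ℝ => (1 - u) ^ (-c) * (X + |log (1 - u)| * Y)) volume 0 1 := by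
  have hpow := (intervalIntegrable_sub_rpow (r := -c) (by linarith) 0 1).const_mul X
  have hlog := ((intervalIntegrable_abs_log_mul_rpow (r := -c) (by linarith)).symm.comp_sub_left
    1).const_mul Y
  simp only [sub_zero, sub_self] at hlog
  convert hpow.add hlog using 1
  ext u
  ring

theorem add_sub_mul_mem_Icc {a b σ u : ℝ} (hσ : σ ∈ Icc a b) (hu : u ∈ Icc (0:ℝ) 1) :
    a + (σ - a) * u ∈ Icc a b :=
  ⟨by nlinarith [hσ.1, hu.1], by nlinarith [hσ.1, hσ.2, hu.1, hu.2]⟩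

theorem add_sub_mul_mem_Ioo {a b σ u : ℝ} (hσ : σ ∈ Ioc a b) (hu : u ∈ Ioo (0:ℝ) 1) :
    a + (σ - a) * u ∈ Ioo a b :=
  ⟨by nlinarith [hσ.1, hu.1], by nlinarith [hσ.1, hσ.2, hu.1, hu.2]⟩

open ContinuousLinearMap in
theorem differentiableAt_integral_one_sub_rpow_mul_comp {y y' : ℝ → ℝ} {a b β s : ℝ}
    (hyc : ContinuousOn y (Icc a b)) (hy'c : ContinuousOn y' (Icc a b))
    (hderiv : ∀ τ ∈ Ioo a b, HasDerivAt y (y' τ) τ) (hβ : β < 1) (hs : s ∈ Ioo a b) :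
    DifferentiableAt ℝ
      (fun p : ℝ × ℝ => ∫ u in (0:ℝ)..1, (1 - u) ^ (-p.1) * y (a + (p.2 - a) * u)) (β, s) := by
  obtain ⟨Y, hY⟩ := isCompact_Icc.exists_bound_of_continuousOn hyc
  obtain ⟨X, hX⟩ := isCompact_Icc.exists_bound_of_continuousOn hy'c
  have hcomp : ∀ {σ : ℝ}, σ ∈ Ioo a b → ∀ {g : ℝ → ℝ}, ContinuousOn g (Icc a b) →
      ContinuousOn (fun u => g (a + (σ - a) * u)) (Icc 0 1) := fun hσ _ hg =>
    hg.comp (by fun_prop) fun _ hu => add_sub_mul_mem_Icc (Ioo_subset_Icc_self hσ) hu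
  set c := (β + 1) / 2
  have hβc : β < c := by simp only [c]; linarith
  have hc : c < 1 := by simp only [c]; linarith
  have hU : Iio c ×ˢ Ioo a b ∈ 𝓝 (β, s) :=
    prod_mem_nhds (Iio_mem_nhds hβc) (Ioo_mem_nhds hs.1 hs.2)
  have hIoc : Ι (0:ℝ) 1 = Ioc 0 1 := uIoc_of_le zero_le_one
  have hIoo : ∀ᵐ u ∂(volume : Measure ℝ), u ∈ Ι (0:ℝ) 1 → u ∈ Ioo (0:ℝ) 1 := by
    filter_upwards [compl_mem_ae_iff.2 (measure_singleton (1:ℝ))] with u hu1 hu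
    rw [hIoc] at hu
    exact ⟨hu.1, lt_of_le_of_ne hu.2 hu1⟩
  refine (intervalIntegral.hasFDerivAt_integral_of_dominated_of_fderiv_le
    (F' := fun (p : ℝ × ℝ) (u : ℝ) => (1 - u) ^ (-p.1) • ((u * y' (a + (p.2 - a) * u)) • snd ℝ ℝ ℝ -
      (log (1 - u) * y (a + (p.2 - a) * u)) • fst ℝ ℝ ℝ))
    (bound := fun u => (1 - u) ^ (-c) * (X + |log (1 - u)| * Y))
    hU ?_ ?_ ?_ ?_ ?_ ?_).differentiableAt
  · filter_upwards [hU] with p hp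
    rw [hIoc]
    exact (by fun_prop : Measurable fun u : ℝ => (1 - u) ^ (-p.1)).aestronglyMeasurable.mul
      (((hcomp hp.2 hyc).mono Ioc_subset_Icc_self).aestronglyMeasurable measurableSet_Ioc)
  · exact (intervalIntegrable_sub_rpow (by linarith) 0 1).mul_continuousOn
      (by rw [uIcc_of_le zero_le_one]; exact hcomp hs hyc)
  · rw [hIoc]
    have hy'm := ((hcomp hs hy'c).mono Ioc_subset_Icc_self).aestronglyMeasurable
      (μ := volume) measurableSet_Ioc
    have hym := ((hcomp hs hyc).mono Ioc_subset_Icc_self).aestronglyMeasurable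
      (μ := volume) measurableSet_Ioc
    have hpow : Measurable fun u : ℝ => (1 - u) ^ (-β) := by fun_prop
    have hlog : Measurable fun u : ℝ => log (1 - u) := by fun_prop
    exact hpow.aestronglyMeasurable.smul
      (((measurable_id.aestronglyMeasurable.mul hy'm).smul aestronglyMeasurable_const).sub
        ((hlog.aestronglyMeasurable.mul hym).smul aestronglyMeasurable_const))
  · filter_upwards [hIoo] with u hu hu01 p hp
    have hθ := add_sub_mul_mem_Icc (Ioo_subset_Icc_self hp.2) (Ioo_subset_Icc_self (hu hu01))
    exact norm_one_sub_rpow_smul_le (hu hu01) hp.1.le (hX _ hθ) (hY _ hθ)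
  · exact intervalIntegrable_one_sub_rpow_mul_add_abs_log hc X Y
  · filter_upwards [hIoo] with u hu hu01 p hp
    exact hasFDerivAt_one_sub_rpow_mul_comp (hu hu01).2
      (hderiv _ (add_sub_mul_mem_Ioo (Ioo_subset_Ioc_self hp.2) (hu hu01)))

theorem integral_sub_rpow_mul_eq_integral_one_sub {a s : ℝ} (hs : a < s) (r : ℝ) (f : ℝ → ℝ) :
    ∫ τ in a..s, (s - τ) ^ r * f τ =
      (s - a) ^ (r + 1) * ∫ u in (0:ℝ)..1, (1 - u) ^ r * f (a + (s - a) * u) := by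
  have hsa : 0 < s - a := sub_pos.2 hs
  calc ∫ τ in a..s, (s - τ) ^ r * f τ
      = (s - a) * ∫ u in (0:ℝ)..1, (s - ((s - a) * u + a)) ^ r * f ((s - a) * u + a) := by
        rw [← smul_eq_mul, smul_integral_comp_mul_add (f := fun τ => (s - τ) ^ r * f τ)]
        simp
    _ = (s - a) * ∫ u in (0:ℝ)..1, (s - a) ^ r * ((1 - u) ^ r * f (a + (s - a) * u)) := by
        congr 1
        refine integral_congr fun u hu => ?_
        rw [uIcc_of_le zero_le_one] at hu
        rw [show s - ((s - a) * u + a) = (s - a) * (1 - u) by ring,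
          mul_rpow hsa.le (by linarith [hu.2]), add_comm ((s - a) * u)]
        ring
    _ = (s - a) ^ (r + 1) * ∫ u in (0:ℝ)..1, (1 - u) ^ r * f (a + (s - a) * u) := by
        rw [intervalIntegral.integral_const_mul, rpow_add_one hsa.ne']
        ring

theorem integral_sub_rpow {r : ℝ} (hr : -1 < r) (a s : ℝ) :
    ∫ τ in a..s, (s - τ) ^ r = (s - a) ^ (r + 1) / (r + 1) := by
  rw [integral_comp_sub_left (fun v => v ^ r) s, sub_self, integral_rpow (Or.inl hr),
    zero_rpow (by linarith), sub_zero]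

theorem integral_sub_rpow_neg_mul_eq_add {a s β : ℝ} {f : ℝ → ℝ} (hs : a ≤ s) (hβ : β < 1)
    (hf : ContinuousOn f (Icc a s)) :
    ∫ τ in a..s, (s - τ) ^ (-β) * f τ =
      (∫ τ in a..s, (s - τ) ^ (-β) * (f τ - f a)) + f a * ((s - a) ^ (1 - β) / (1 - β)) := by
  have hker := intervalIntegrable_sub_rpow (r := -β) (by linarith) a s
  have hcaputo : IntervalIntegrable (fun τ => (s - τ) ^ (-β) * (f τ - f a)) volume a s :=
    hker.mul_continuousOn (by rw [uIcc_of_le hs]; exact hf.sub continuousOn_const)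
  rw [show 1 - β = -β + 1 by ring, ← integral_sub_rpow (by linarith),
    ← intervalIntegral.integral_const_mul, ← integral_add hcaputo (hker.const_mul _)]
  exact integral_congr fun τ _ => by ring

theorem differentiableAt_integral_sub_rpow_mul {y α : ℝ → ℝ} {a b t : ℝ}
    (hy : ContDiffOn ℝ 1 y (Icc a b)) (hα : DifferentiableAt ℝ α t) (hαt : α t < 1)
    (ht : t ∈ Ioo a b) :
    DifferentiableAt ℝ (fun s => ∫ τ in a..s, (s - τ) ^ (-α s) * y τ) t := by
  have hJ := (differentiableAt_integral_one_sub_rpow_mul_comp hy.continuousOn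
    (hy.continuousOn_derivWithin (uniqueDiffOn_Icc (ht.1.trans ht.2)) le_rfl)
    (fun τ hτ => (hy.differentiableOn one_ne_zero τ (Ioo_subset_Icc_self hτ)).hasDerivWithinAt
      |>.hasDerivAt (Icc_mem_nhds hτ.1 hτ.2)) hαt ht).comp
    (f := fun s => (α s, s)) t (hα.prodMk differentiableAt_id)
  have hpow : DifferentiableAt ℝ (fun s => (s - a) ^ (-α s + 1)) t :=
    (differentiableAt_id.sub_const a).rpow (hα.neg.add_const 1) (sub_pos.2 ht.1).ne'
  refine (hpow.mul hJ).congr_of_eventuallyEq ?_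
  filter_upwards [Ioi_mem_nhds ht.1] with s hs
  exact integral_sub_rpow_mul_eq_integral_one_sub hs (-α s) y

theorem riemannLiouville_eq_caputo_add_correction_general
    (a b : ℝ) (x α : ℝ → ℝ)
    (hx : ContDiffOn ℝ 1 x (Set.Icc a b))
    (hα : DifferentiableOn ℝ α (Set.Ioo a b))
    (hα01 : ∀ s ∈ Set.Ioo a b, α s ∈ Set.Ioo (0 : ℝ) 1)
    (t : ℝ) (ht : t ∈ Set.Ioo a b) :
    (1 / Real.Gamma (1 - α t)) *
        deriv (fun s => ∫ τ in a..s, (s - τ) ^ (-(α s)) * x τ) t =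
      (1 / Real.Gamma (1 - α t)) *
          deriv (fun s => ∫ τ in a..s, (s - τ) ^ (-(α s)) * (x τ - x a)) t +
        (x a / Real.Gamma (1 - α t)) * (t - a) ^ (-(α t)) +
        (x a * deriv α t / Real.Gamma (2 - α t)) * (t - a) ^ (1 - α t) *
          (1 / (1 - α t) - Real.log (t - a)) := by
  have hαt : HasDerivAt α (deriv α t) t :=
    (hα.differentiableAt (Ioo_mem_nhds ht.1 ht.2)).hasDerivAt
  have h1α : 1 - α t ≠ 0 := (sub_pos.2 (hα01 t ht).2).ne'
  have hsplit : (fun s => ∫ τ in a..s, (s - τ) ^ (-(α s)) * x τ) =ᶠ[𝓝 t] fun s =>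
      (∫ τ in a..s, (s - τ) ^ (-(α s)) * (x τ - x a)) +
        x a * ((s - a) ^ (1 - α s) / (1 - α s)) := by
    filter_upwards [Ioo_mem_nhds ht.1 ht.2] with s hs
    exact integral_sub_rpow_neg_mul_eq_add hs.1.le (hα01 s hs).2
      (hx.continuousOn.mono (Icc_subset_Icc_right hs.2.le))
  have hcaputo := differentiableAt_integral_sub_rpow_mul (hx.sub (contDiffOn_const (c := x a)))
    hαt.differentiableAt (hα01 t ht).2 ht
  have hcorr : HasDerivAt (fun s => x a * ((s - a) ^ (1 - α s) / (1 - α s))) _ t :=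
    ((((hasDerivAt_id' t).sub_const a).rpow (hαt.const_sub 1) (sub_pos.2 ht.1)).div
      (hαt.const_sub 1) h1α).const_mul (x a)
  rw [hsplit.deriv_eq, deriv_fun_add hcaputo hcorr.differentiableAt, hcorr.deriv,
    sub_sub_cancel_left, show 2 - α t = 1 - α t + 1 by ring, Gamma_add_one h1α]
  generalize deriv (fun s => ∫ τ in a..s, (s - τ) ^ (-(α s)) * (x τ - x a)) t = D
  have hΓ : Gamma (1 - α t) ≠ 0 := (Gamma_pos_of_pos (sub_pos.2 (hα01 t ht).2)).ne'
  field_simp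
  ring

/-- Relation between the type I left Riemann--Liouville and Caputo derivatives
of variable order. -/
theorem riemannLiouville_eq_caputo_add_correction
    (a b : ℝ) (hab : a < b) (x α : ℝ → ℝ)
    (hx : ContDiffOn ℝ 1 x (Set.Icc a b))
    (hα : DifferentiableOn ℝ α (Set.Ioo a b))
    (hα01 : ∀ s ∈ Set.Ioo a b, α s ∈ Set.Ioo (0 : ℝ) 1)
    (t : ℝ) (ht : t ∈ Set.Ioo a b) :
    (1 / Real.Gamma (1 - α t)) *
        deriv (fun s => ∫ τ in a..s, (s - τ) ^ (-(α s)) * x τ) t =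
      (1 / Real.Gamma (1 - α t)) *
          deriv (fun s => ∫ τ in a..s, (s - τ) ^ (-(α s)) * (x τ - x a)) t +
        (x a / Real.Gamma (1 - α t)) * (t - a) ^ (-(α t)) +
        (x a * deriv α t / Real.Gamma (2 - α t)) * (t - a) ^ (1 - α t) *
          (1 / (1 - α t) - Real.log (t - a)) :=
  riemannLiouville_eq_caputo_add_correction_general a b x α hx hα hα01 t ht
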